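/- For integers r ≥ 0, m ≥ 1 and n ≥ 1, the shifted multiple harmonic number ζ_n({1}_m | r+1) = Σ_{1 ≤ k_m < ⋯ < k_1 ≤ n} 1/((k_1+r)⋯(k_m+r)) satisfies the recurrence ζ_n({1}_m | r+1) = ((−1)^{m−1}/m) · Σ_{i=0}^{m−1} (−1)^i · ζ_n({1}_i | r+1) · ( H_{n+r}^{(m−i)} − H_r^{(m−i)} ), where ζ_n({1}_0 | r+1) = 1. -/

import Mathlib

open Finset

/-- Multiple harmonic number `ζ_n({1}_m)`:
`ζ_n({1}_m) = ∑_{n ≥ n₁ > n₂ > ⋯ > n_m ≥ 1} 1/(n₁ ⋯ n_m)`, with `ζ_n({1}_0) = 1`. -/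
noncomputable def mhn : ℕ → ℕ → ℝ
  | _, 0 => 1
  | n, m + 1 => ∑ k ∈ Finset.Icc 1 n, mhn (k - 1) m / (k : ℝ)

/-- Multiple harmonic star number `ζ_n^⋆({1}_m)`:
`ζ_n^⋆({1}_m) = ∑_{n ≥ n₁ ≥ n₂ ≥ ⋯ ≥ n_m ≥ 1} 1/(n₁ ⋯ n_m)`, with `ζ_n^⋆({1}_0) = 1`. -/
noncomputable def mhsn : ℕ → ℕ → ℝ
  | _, 0 => 1
  | n, m + 1 => ∑ k ∈ Finset.Icc 1 n, mhsn k m / (k : ℝ)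

/-- Multiple harmonic number with repeated real argument `p`: `ζ_n({p}_m)`. -/
noncomputable def mhnP (p : ℝ) : ℕ → ℕ → ℝ
  | _, 0 => 1
  | n, m + 1 => ∑ k ∈ Finset.Icc 1 n, mhnP p (k - 1) m / (k : ℝ) ^ p

/-- Multiple harmonic star number with repeated real argument `p`: `ζ_n^⋆({p}_m)`. -/
noncomputable def mhsnP (p : ℝ) : ℕ → ℕ → ℝ
  | _, 0 => 1
  | n, m + 1 => ∑ k ∈ Finset.Icc 1 n, mhsnP p k m / (k : ℝ) ^ p

/-- Generalized harmonic number `H_n^{(p)} = ∑_{j=1}^n 1/j^p`. -/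
noncomputable def genH (p n : ℕ) : ℝ := ∑ j ∈ Finset.Icc 1 n, 1 / (j : ℝ) ^ p

/-- Auxiliary: `hypAux m n k = h_n^{(m+1)}(k)` for `k ≥ 1` (peel off the weak outer indices). -/
noncomputable def hypAux : ℕ → ℕ → ℕ → ℝ
  | 0, n, k => mhn n k
  | m + 1, n, k => ∑ j ∈ Finset.Icc 1 n, hypAux m j k

/-- Generalized hyperharmonic number `h_n^{(m)}(k)`, with the convention
`h_n^{(m)}(0) = C(m+n-1, m-1)`. -/
noncomputable def gh (n m k : ℕ) : ℝ :=
  if k = 0 then (Nat.choose (m + n - 1) (m - 1) : ℝ) else hypAux (m - 1) n k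

/-- Unsigned Stirling number of the first kind, defined by the standard recurrence,
equivalently by `x(x+1)⋯(x+n-1) = ∑_{k=0}^n [n; k] xᵏ`. -/
def stir1 : ℕ → ℕ → ℕ
  | 0, 0 => 1
  | 0, _ + 1 => 0
  | _ + 1, 0 => 0
  | n + 1, k + 1 => stir1 n k + n * stir1 n (k + 1)

/-- Multiple zeta value `ζ(p, {1}_m)`. -/
noncomputable def mzv (p m : ℕ) : ℝ := ∑' n : ℕ, mhn n m / (n + 1 : ℝ) ^ p

/-- Multiple zeta star value `ζ^⋆(p, {1}_m)`. -/
noncomputable def mzvStar (p m : ℕ) : ℝ := ∑' n : ℕ, mhsn (n + 1) m / (n + 1 : ℝ) ^ p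

/-- Riemann zeta value `ζ(p) = ∑_{n=1}^∞ 1/n^p`. -/
noncomputable def rz (p : ℕ) : ℝ := ∑' n : ℕ, 1 / (n + 1 : ℝ) ^ p

/-- `U_{m,r}(p) = ∑_{n=1}^∞ ζ_{n+r}({1}_m)/n^p`. -/
noncomputable def Usum (m r p : ℕ) : ℝ := ∑' n : ℕ, mhn (n + 1 + r) m / (n + 1 : ℝ) ^ p

/-- Strictly decreasing `q`-fold sum `Ā_q(n) = ∑_{1 ≤ k_q < ⋯ < k₁ ≤ n} a_{k₁}⋯a_{k_q}`,
with `Ā_0(n) = 1` (so `Ā_q(n) = 0` when `n < q`). -/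
def sdSum {R : Type*} [Semiring R] (a : ℕ → R) : ℕ → ℕ → R
  | _, 0 => 1
  | n, q + 1 => ∑ k ∈ Finset.Icc 1 n, a k * sdSum a (k - 1) q

/-- Weakly decreasing `q`-fold sum `A_q(n) = ∑_{1 ≤ k_q ≤ ⋯ ≤ k₁ ≤ n} a_{k₁}⋯a_{k_q}`,
with `A_0(n) = 1`. -/
def wdSum {R : Type*} [Semiring R] (a : ℕ → R) : ℕ → ℕ → R
  | _, 0 => 1
  | n, q + 1 => ∑ k ∈ Finset.Icc 1 n, a k * wdSum a k q

/-! `ζ_n({1}_m | r+1)` is the `m`-th elementary symmetric function of the numbers `1/(k+r)`,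
`1 ≤ k ≤ n`, and `H_{n+r}^{(p)} - H_r^{(p)}` is their `p`-th power sum, so the recurrence is
Newton's identity, evaluated at these numbers. -/

namespace Multiset

lemma esymm_cons_succ {R : Type*} [CommSemiring R] (x : R) (s : Multiset R) (q : ℕ) :
    (x ::ₘ s).esymm (q + 1) = s.esymm (q + 1) + x * s.esymm q := by
  simp [esymm, map_map, sum_map_mul_left]

end Multiset

lemma Finset.Nat.sum_antidiagonal_filter_fst_lt {M : Type*} [AddCommMonoid M] (m : ℕ)
    (f : ℕ → ℕ → M) :
    ∑ p ∈ antidiagonal m with p.1 < m, f p.1 p.2 = ∑ i ∈ range m, f i (m - i) := by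
  rw [sum_filter, Nat.sum_antidiagonal_eq_sum_range_succ (fun i j => if i < m then f i j else 0),
    sum_range_succ, if_neg (lt_irrefl m), add_zero]
  exact sum_congr rfl fun i hi => if_pos (mem_range.mp hi)

section sdSum

variable {R : Type*}

lemma sdSum_succ_succ [Semiring R] (a : ℕ → R) (n q : ℕ) :
    sdSum a (n + 1) (q + 1) = sdSum a n (q + 1) + a (n + 1) * sdSum a n q := by
  rw [sdSum, sum_Icc_succ_top (by omega)]
  rfl

lemma sdSum_eq_esymm [CommSemiring R] (a : ℕ → R) (n q : ℕ) :
    sdSum a n q = ((Icc 1 n).val.map a).esymm q := by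
  induction n generalizing q with
  | zero => cases q <;> simp [sdSum, Multiset.esymm, Multiset.powersetCard_zero_right]
  | succ n ih =>
    cases q with
    | zero => simp [sdSum, Multiset.esymm]
    | succ q =>
      rw [sdSum_succ_succ, ih, ih, ← insert_Icc_right_eq_Icc_add_one (by omega),
        insert_val_of_notMem (by simp), Multiset.map_cons, Multiset.esymm_cons_succ]

lemma sdSum_eq_aeval_esymm [CommSemiring R] (a : ℕ → R) (n q : ℕ) :
    sdSum a n q =
      MvPolynomial.aeval (fun k : Icc 1 n => a k) (MvPolynomial.esymm (Icc 1 n) R q) := by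
  rw [MvPolynomial.aeval_esymm_eq_multiset_esymm, univ_eq_attach, attach_val, sdSum_eq_esymm]
  exact congrArg (Multiset.esymm · q) (Multiset.attach_map_val' _ a).symm

lemma aeval_psum_eq_sum_pow [CommSemiring R] (a : ℕ → R) (n j : ℕ) :
    MvPolynomial.aeval (fun k : Icc 1 n => a k) (MvPolynomial.psum (Icc 1 n) R j) =
      ∑ k ∈ Icc 1 n, a k ^ j := by
  simp only [MvPolynomial.psum, map_sum, map_pow, MvPolynomial.aeval_X]
  exact sum_coe_sort _ (a · ^ j)

lemma mul_sdSum_eq_sum [CommRing R] (a : ℕ → R) (n m : ℕ) :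
    (m : R) * sdSum a n m = (-1) ^ (m + 1) *
      ∑ i ∈ range m, (-1) ^ i * sdSum a n i * ∑ k ∈ Icc 1 n, a k ^ (m - i) := by
  have h := congrArg (MvPolynomial.aeval (fun k : Icc 1 n => a k))
    (MvPolynomial.mul_esymm_eq_sum (Icc 1 n) R m)
  simp only [map_mul, map_sum, map_pow, map_neg, map_one, map_natCast, ← sdSum_eq_aeval_esymm,
    aeval_psum_eq_sum_pow] at h
  rw [h, Finset.Nat.sum_antidiagonal_filter_fst_lt m
    (fun i j => (-1) ^ i * sdSum a n i * ∑ k ∈ Icc 1 n, a k ^ j)]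

end sdSum

lemma genH_add_sub_genH (p n r : ℕ) :
    genH p (n + r) - genH p r = ∑ k ∈ Icc 1 n, (1 / ((k : ℝ) + r)) ^ p := by
  induction n with
  | zero => simp
  | succ n ih =>
    rw [sum_Icc_succ_top (by omega), ← ih, genH, genH, genH, show n + 1 + r = n + r + 1 by omega,
      sum_Icc_succ_top (by omega)]
    push_cast
    ring

theorem shifted_mhn_recurrence_general (r m n : ℕ) (hm : 1 ≤ m) :
    sdSum (fun k => 1 / ((k : ℝ) + r)) n m =
      ((-1 : ℝ) ^ (m - 1) / (m : ℝ)) *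
        ∑ i ∈ Finset.range m,
          (-1 : ℝ) ^ i * sdSum (fun k => 1 / ((k : ℝ) + r)) n i *
            (genH (m - i) (n + r) - genH (m - i) r) := by
  have newton := mul_sdSum_eq_sum (fun k => 1 / ((k : ℝ) + r)) n m
  simp only [genH_add_sub_genH]
  have sign : (-1 : ℝ) ^ (m + 1) = (-1) ^ (m - 1) := by
    rw [show m + 1 = m - 1 + 2 by omega, pow_add, neg_one_sq, mul_one]
  have hm₀ : (m : ℝ) ≠ 0 := by positivity
  rw [sign] at newton
  rw [div_mul_eq_mul_div, eq_div_iff hm₀]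
  linear_combination newton

/-- formula (2.15): the shifted multiple harmonic number
`ζ_n({1}_m | r+1) = ∑_{1 ≤ k_m < ⋯ < k₁ ≤ n} 1/((k₁+r)⋯(k_m+r))` satisfies
`ζ_n({1}_m | r+1) = ((-1)^{m-1}/m) ∑_{i=0}^{m-1} (-1)^i ζ_n({1}_i | r+1) (H_{n+r}^{(m-i)} - H_r^{(m-i)})`. -/
theorem shifted_mhn_recurrence (r m n : ℕ) (hm : 1 ≤ m) (hn : 1 ≤ n) :
    sdSum (fun k => 1 / ((k : ℝ) + r)) n m =
      ((-1 : ℝ) ^ (m - 1) / (m : ℝ)) *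
        ∑ i ∈ Finset.range m,
          (-1 : ℝ) ^ i * sdSum (fun k => 1 / ((k : ℝ) + r)) n i *
            (genH (m - i) (n + r) - genH (m - i) r) :=
  shifted_mhn_recurrence_general r m n hm
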